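/- Let V be a vector space over ℂ with ℤ-indexed bilinear products aₙb, carrying an internal direct-sum grading V = ⊕_{n∈ℕ} Vₙ in which V₀ = ℂ𝟙 is one-dimensional spanned by a vector 𝟙 ≠ 0 and a₋₁𝟙 = a for all a ∈ V. Let λ ∈ ℂ, λ ≠ 0, and let P : V → V be an ordinary Rota-Baxter operator of weight λ which is homogeneous of degree N for some integer N ≤ 0, i.e. P(Vₙ) ⊆ V_{n+N} for all n ∈ ℕ (with the convention Vₘ = 0 for m < 0). Then P(𝟙) = 0 or P(𝟙) = −λ𝟙; and in either case P ∘ P + λ·P = 0. (These hypotheses hold for any CFT-type vertex operator algebra.) -/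
import Mathlib


/-- An ordinary Rota-Baxter operator of weight `lam` on the ℤ-indexed products `μ`. -/
def OrdRBO {V : Type*} [AddCommGroup V] [Module ℂ V]
    (μ : ℤ → V →ₗ[ℂ] V →ₗ[ℂ] V) (P : V →ₗ[ℂ] V) (lam : ℂ) : Prop :=
  ∀ (n : ℤ) (a b : V),
    μ n (P a) (P b) = P (μ n (P a) b) + P (μ n a (P b)) + lam • P (μ n a b)

/-- On a CFT-type graded algebra, a homogeneous ordinary Rota-Baxter operator of
weight `lam ≠ 0` and degree `N ≤ 0` satisfies `P 𝟙 = 0` or `P 𝟙 = −lam·𝟙`, and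
`P² + lam·P = 0`. -/
theorem stmt8 {V : Type*} [AddCommGroup V] [Module ℂ V]
    (μ : ℤ → V →ₗ[ℂ] V →ₗ[ℂ] V) (one : V)
    (Vg : ℕ → Submodule ℂ V) (hInt : DirectSum.IsInternal Vg)
    (hone : one ≠ 0) (hV0 : Vg 0 = Submodule.span ℂ {one})
    (hcrea : ∀ a : V, μ (-1) a one = a)
    (lam : ℂ) (hlam : lam ≠ 0)
    (P : V →ₗ[ℂ] V) (hP : OrdRBO μ P lam)
    (N : ℤ) (hN : N ≤ 0)
    (hhom : ∀ (n : ℕ) (a : V), a ∈ Vg n →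
      (0 ≤ (n : ℤ) + N → P a ∈ Vg ((n : ℤ) + N).toNat) ∧
      ((n : ℤ) + N < 0 → P a = 0)) :
    (P one = 0 ∨ P one = -lam • one) ∧ ∀ a : V, P (P a) + lam • P a = 0 := by
  have hone0 : one ∈ Vg 0 := by
    rw [hV0]; exact Submodule.mem_span_singleton_self one
  obtain ⟨c, hc⟩ : ∃ c : ℂ, P one = c • one := by
    rcases lt_or_eq_of_le hN with h | h
    · refine ⟨0, ?_⟩
      have := (hhom 0 one hone0).2 (by simpa using h)
      simpa using this
    · have := (hhom 0 one hone0).1 (by simp [h])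
      rw [h] at this
      simp only [Nat.cast_zero, zero_add, Int.toNat_zero] at this
      rw [hV0, Submodule.mem_span_singleton] at this
      obtain ⟨d, hd⟩ := this
      exact ⟨d, hd.symm⟩
  have key : ∀ a : V, P (P a) + lam • P a = 0 := by
    intro a
    have h := hP (-1) a one
    rw [hc] at h
    simp only [map_smul, hcrea] at h
    -- h : c • P a = P (P a) + c • P a + lam • P a
    have h2 : P (P a) + lam • P a
        = (P (P a) + c • P a + lam • P a) - c • P a := by abel
    rw [h2, ← h, sub_self]
  refine ⟨?_, key⟩
  have h1 := key one
  rw [hc, map_smul, hc, smul_smul, smul_smul, ← add_smul] at h1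
  have hz : c * c + lam * c = 0 := by
    by_contra hcc
    exact hone (by simpa [hcc] using (smul_eq_zero.mp h1))
  rcases mul_eq_zero.mp (show c * (c + lam) = 0 by linear_combination hz) with h | h
  · left; rw [hc, h, zero_smul]
  · right
    rw [hc, eq_neg_of_add_eq_zero_left h]
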